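/- arXiv:2605.26899 — 5 statements merged into one kernel-verified Lean document; each statement's English description precedes it below -/
import Mathlib

section
/- Let 𝓗 be a complex Hilbert space, B : ℝ → (𝓗 →L[ℂ] 𝓗) continuous with B t self-adjoint for every t, and r : ℝ → 𝓗 continuous. If e : ℝ → 𝓗 is differentiable with e'(t) = −i • ( (B t)(e t) + r t ) for all t and e s = 0, then for every t ≥ s, ‖e t‖ ≤ ∫_s^t ‖r τ‖ dτ. -/
/-!
Since `B t` is self-adjoint, `⟪e, -i B e⟫` is purely imaginary, so the unitary part of the
equation does not change `‖e‖`: `(‖e‖²)' = 2 re ⟪e, -i r⟫ ≤ 2 ‖r‖ ‖e‖`, i.e. `‖e‖' ≤ ‖r‖`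
wherever `e ≠ 0`. The norm is not differentiable at `0`, so the comparison argument is run on
`√(‖e‖² + ε²)`, which obeys the same differential inequality, and then `ε → 0`.
-/

open Set Complex intervalIntegral
open scoped RealInnerProductSpace

theorem LinearMap.IsSymmetric.re_inner_neg_I_smul_apply_add {E : Type*} [NormedAddCommGroup E]
    [InnerProductSpace ℂ E] {A : E →ₗ[ℂ] E} (hA : A.IsSymmetric) (x y : E) :
    re (inner ℂ x ((-I) • (A x + y))) = im (inner ℂ x y) := by
  simpa [inner_smul_right] using hA.im_inner_self_apply x

section RealInnerProductSpace

variable {F : Type*} [NormedAddCommGroup F] [InnerProductSpace ℝ F]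

theorem HasDerivWithinAt.sqrt_norm_sq_add_sq {e : ℝ → F} {e' : F} {S : Set ℝ} {τ ε : ℝ}
    (he : HasDerivWithinAt e e' S τ) (hε : ε ≠ 0) :
    HasDerivWithinAt (fun t ↦ √(‖e t‖ ^ 2 + ε ^ 2))
      (⟪e τ, e'⟫ / √(‖e τ‖ ^ 2 + ε ^ 2)) S τ := by
  convert (he.norm_sq.add_const (ε ^ 2)).sqrt (by positivity) using 1
  field_simp

theorem norm_le_norm_add_integral_of_inner_deriv_le {e e' : ℝ → F} {g : ℝ → ℝ} {s t : ℝ}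
    (hst : s ≤ t) (hcont : ContinuousOn e (Icc s t))
    (he : ∀ τ ∈ Ico s t, HasDerivWithinAt e (e' τ) (Ici τ) τ) (hg : Continuous g)
    (hg_nonneg : ∀ τ ∈ Ico s t, 0 ≤ g τ)
    (hbound : ∀ τ ∈ Ico s t, ⟪e τ, e' τ⟫ ≤ ‖e τ‖ * g τ) :
    ‖e t‖ ≤ ‖e s‖ + ∫ τ in s..t, g τ := by
  refine le_of_forall_pos_le_add fun ε hε ↦ ?_
  have hG : ∀ τ, HasDerivAt (fun u ↦ √(‖e s‖ ^ 2 + ε ^ 2) + ∫ x in s..u, g x) (g τ) τ :=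
    fun τ ↦ (hg.integral_hasStrictDerivAt s τ).hasDerivAt.const_add _
  have hderiv_le : ∀ τ ∈ Ico s t, ⟪e τ, e' τ⟫ / √(‖e τ‖ ^ 2 + ε ^ 2) ≤ g τ := by
    intro τ hτ
    have hnorm_le : ‖e τ‖ ≤ √(‖e τ‖ ^ 2 + ε ^ 2) :=
      Real.le_sqrt_of_sq_le (le_add_of_nonneg_right (sq_nonneg ε))
    refine div_le_of_le_mul₀ (Real.sqrt_nonneg _) (hg_nonneg τ hτ) ?_
    calc ⟪e τ, e' τ⟫ ≤ ‖e τ‖ * g τ := hbound τ hτ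
      _ ≤ √(‖e τ‖ ^ 2 + ε ^ 2) * g τ := mul_le_mul_of_nonneg_right hnorm_le (hg_nonneg τ hτ)
      _ = g τ * √(‖e τ‖ ^ 2 + ε ^ 2) := mul_comm _ _
  have hcompare : √(‖e t‖ ^ 2 + ε ^ 2) ≤ √(‖e s‖ ^ 2 + ε ^ 2) + ∫ τ in s..t, g τ :=
    image_le_of_deriv_right_le_deriv_boundary
      (((hcont.norm.pow 2).add continuousOn_const).sqrt)
      (fun τ hτ ↦ HasDerivWithinAt.sqrt_norm_sq_add_sq (he τ hτ) hε.ne') (by simp)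
      (fun τ _ ↦ (hG τ).continuousAt.continuousWithinAt) (fun τ _ ↦ (hG τ).hasDerivWithinAt)
      hderiv_le (right_mem_Icc.2 hst)
  have hsqrt_le : √(‖e s‖ ^ 2 + ε ^ 2) ≤ ‖e s‖ + ε :=
    Real.sqrt_le_left (by positivity) |>.2 (by nlinarith [norm_nonneg (e s)])
  calc ‖e t‖ ≤ √(‖e t‖ ^ 2 + ε ^ 2) :=
        Real.le_sqrt_of_sq_le (le_add_of_nonneg_right (sq_nonneg ε))
    _ ≤ ‖e s‖ + ε + ∫ τ in s..t, g τ := by linarith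
    _ = ‖e s‖ + (∫ τ in s..t, g τ) + ε := by ring

end RealInnerProductSpace

theorem energy_estimate_inhomogeneous_general
    {𝓗 : Type*} [NormedAddCommGroup 𝓗] [InnerProductSpace ℂ 𝓗] [CompleteSpace 𝓗]
    (B : ℝ → 𝓗 →L[ℂ] 𝓗)
    (hsa : ∀ t, IsSelfAdjoint (B t))
    (r : ℝ → 𝓗) (hr : Continuous r)
    (e : ℝ → 𝓗) (s : ℝ)
    (he : ∀ t, HasDerivAt e ((-Complex.I) • ((B t) (e t) + r t)) t)
    (hes : e s = 0) :
    ∀ t, s ≤ t → ‖e t‖ ≤ ∫ τ in s..t, ‖r τ‖ := by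
  let _ : InnerProductSpace ℝ 𝓗 := InnerProductSpace.complexToReal
  intro t hst
  have hbound : ∀ τ, ⟪e τ, (-I) • (B τ (e τ) + r τ)⟫ ≤ ‖e τ‖ * ‖r τ‖ := fun τ ↦
    calc ⟪e τ, (-I) • (B τ (e τ) + r τ)⟫ = im (inner ℂ (e τ) (r τ)) :=
          (hsa τ).isSymmetric.re_inner_neg_I_smul_apply_add _ _
      _ ≤ ‖e τ‖ * ‖r τ‖ := (im_le_norm _).trans (norm_inner_le_norm _ _)
  simpa [hes] using norm_le_norm_add_integral_of_inner_deriv_le hst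
    (fun τ _ ↦ (he τ).continuousAt.continuousWithinAt) (fun τ _ ↦ (he τ).hasDerivWithinAt)
    hr.norm (fun τ _ ↦ norm_nonneg _) (fun τ _ ↦ hbound τ)

/-- **Energy estimate for the inhomogeneous Schr\u00f6dinger equation.**
If `B t` are bounded self-adjoint operators depending continuously on `t`,
`r` is continuous, and `e` solves `e' = -i (B(t) e + r(t))` with `e s = 0`,
then `‖e t‖ ≤ ∫_s^t ‖r τ‖ dτ` for `t ≥ s`. -/
theorem energy_estimate_inhomogeneous
    {𝓗 : Type*} [NormedAddCommGroup 𝓗] [InnerProductSpace ℂ 𝓗] [CompleteSpace 𝓗]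
    (B : ℝ → 𝓗 →L[ℂ] 𝓗) (hB : Continuous B)
    (hsa : ∀ t, IsSelfAdjoint (B t))
    (r : ℝ → 𝓗) (hr : Continuous r)
    (e : ℝ → 𝓗) (s : ℝ)
    (he : ∀ t, HasDerivAt e ((-Complex.I) • ((B t) (e t) + r t)) t)
    (hes : e s = 0) :
    ∀ t, s ≤ t → ‖e t‖ ≤ ∫ τ in s..t, ‖r τ‖ :=
  energy_estimate_inhomogeneous_general B hsa r hr e s he hes
end

section
/- Let 𝓗 be a complex Hilbert space, let P : 𝓗 →L[ℂ] 𝓗 be an orthogonal projection (self-adjoint with P ∘ P = P), and let A : ℝ → (𝓗 →L[ℂ] 𝓗) be continuous with A t self-adjoint for every t. Suppose u : ℝ → 𝓗 is differentiable with u'(t) = −i • (A t)(u t) for all t, and v : ℝ → 𝓗 is differentiable with v'(t) = −i • (P ∘L (A t) ∘L P)(v t) for all t and v s = P (u s). Then for every t ≥ s, ‖P (u t) − v t‖ ≤ ∫_s^t ‖(A τ) ((1 − P)(u τ))‖ dτ. -/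
/-!
The defect `w = P u - v` vanishes at `s` and solves `w' = -i (P A P) w - i P A (1 - P) u`.
As `P A P` is self-adjoint, `-i P A P` is skew and does not change `‖w‖`, so `‖w‖` grows at
rate at most `‖P A (1 - P) u‖ ≤ ‖A (1 - P) u‖`.
-/

theorem norm_le_norm_add_integral_of_inner_deriv_le_s5 {F : Type*} [NormedAddCommGroup F]
    [InnerProductSpace ℝ F] {w w' : ℝ → F} {g : ℝ → ℝ} (hw : ∀ t, HasDerivAt w (w' t) t)
    (hg : Continuous g) (hg_nonneg : ∀ t, 0 ≤ g t)
    (hbound : ∀ t, inner ℝ (w t) (w' t) ≤ ‖w t‖ * g t) {s t : ℝ} (hst : s ≤ t) :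
    ‖w t‖ ≤ ‖w s‖ + ∫ τ in s..t, g τ := by
  -- `‖w‖` need not be differentiable where `w` vanishes, so work with `√(‖w‖² + ε²)`.
  refine le_of_forall_pos_le_add fun ε hε => ?_
  set ψ : ℝ → ℝ := fun τ => √(‖w τ‖ ^ 2 + ε ^ 2)
  have hψ_pos : ∀ τ, 0 < ψ τ := fun τ => Real.sqrt_pos.mpr (by positivity)
  have hnorm_le_ψ : ∀ τ, ‖w τ‖ ≤ ψ τ := fun τ => Real.le_sqrt_of_sq_le (by nlinarith)
  have hψ_deriv : ∀ τ, HasDerivAt ψ (inner ℝ (w τ) (w' τ) / ψ τ) τ := fun τ => by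
    convert ((hw τ).norm_sq.add_const (ε ^ 2)).sqrt (by positivity) using 1
    rw [mul_div_mul_left _ _ two_ne_zero]
  have hψ_deriv_le : ∀ τ, inner ℝ (w τ) (w' τ) / ψ τ ≤ g τ := fun τ =>
    div_le_of_le_mul₀ (hψ_pos τ).le (hg_nonneg τ)
      (((hbound τ).trans (mul_le_mul_of_nonneg_right (hnorm_le_ψ τ) (hg_nonneg τ))).trans_eq
        (mul_comm _ _))
  have hmono : Monotone fun τ => (∫ x in s..τ, g x) - ψ τ := by
    refine monotone_of_hasDerivAt_nonneg (fun τ =>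
      (hg.integral_hasStrictDerivAt s τ).hasDerivAt.sub (hψ_deriv τ)) fun τ => ?_
    exact sub_nonneg.mpr (hψ_deriv_le τ)
  have hψ_s : ψ s ≤ ‖w s‖ + ε :=
    Real.sqrt_le_iff.mpr ⟨by positivity, by nlinarith [norm_nonneg (w s)]⟩
  have := hmono hst
  simp only [intervalIntegral.integral_same, zero_sub] at this
  linarith [hnorm_le_ψ t]

theorem IsStarProjection.norm_apply_le {𝕜 E : Type*} [RCLike 𝕜] [NormedAddCommGroup E]
    [InnerProductSpace 𝕜 E] [CompleteSpace E] {P : E →L[𝕜] E} (hP : IsStarProjection P)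
    (x : E) : ‖P x‖ ≤ ‖x‖ :=
  (P.le_of_opNorm_le (hP.norm_le P) x).trans_eq (one_mul _)

section

variable {𝓗 : Type*} [NormedAddCommGroup 𝓗] [InnerProductSpace ℂ 𝓗]

theorem IsSelfAdjoint.re_inner_neg_I_smul_add_le [CompleteSpace 𝓗] {B : 𝓗 →L[ℂ] 𝓗}
    (hB : IsSelfAdjoint B) (x y : 𝓗) :
    (inner ℂ x (-Complex.I • (B x + y))).re ≤ ‖x‖ * ‖y‖ := by
  have him : (inner ℂ x (B x)).im = 0 := hB.isSymmetric.im_inner_self_apply x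
  calc (inner ℂ x (-Complex.I • (B x + y))).re = (inner ℂ x y).im := by
        simp [inner_smul_right, him]
    _ ≤ ‖inner ℂ x y‖ := Complex.im_le_norm _
    _ ≤ ‖x‖ * ‖y‖ := norm_inner_le_norm x y

theorem hasDerivAt_apply_sub_cutoff {P A : 𝓗 →L[ℂ] 𝓗} (hP : P ∘L P = P) {u v : ℝ → 𝓗} {t : ℝ}
    (hu : HasDerivAt u (-Complex.I • A (u t)) t)
    (hv : HasDerivAt v (-Complex.I • (P ∘L A ∘L P) (v t)) t) :
    HasDerivAt (fun τ => P (u τ) - v τ)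
      (-Complex.I • ((P ∘L A ∘L P) (P (u t) - v t) + P (A ((1 - P) (u t))))) t := by
  refine (((P.restrictScalars ℝ).hasFDerivAt.comp_hasDerivAt t hu).sub hv).congr_deriv ?_
  have hPP : P (P (u t)) = P (u t) := congr($hP (u t))
  simp only [ContinuousLinearMap.coe_restrictScalars', ContinuousLinearMap.comp_apply, map_smul,
    map_sub, sub_apply, one_apply_eq_self, hPP, ← smul_sub]
  congr 1
  abel

end

/-- **Duhamel comparison for the cut-off dynamics.**
Let `P` be an orthogonal projection on a complex Hilbert space `𝓗` and `A`
a norm-continuous family of bounded self-adjoint operators.  If `u` solves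
`u' = -i A(t) u` and `v` solves the cut-off equation `v' = -i (P A(t) P) v`
with `v s = P (u s)`, then for `t ≥ s`,
`‖P (u t) - v t‖ ≤ ∫_s^t ‖A(τ) ((1 - P)(u τ))‖ dτ`. -/
theorem duhamel_cutoff_comparison
    {𝓗 : Type*} [NormedAddCommGroup 𝓗] [InnerProductSpace ℂ 𝓗] [CompleteSpace 𝓗]
    (P : 𝓗 →L[ℂ] 𝓗) (hPsa : IsSelfAdjoint P) (hPidem : P ∘L P = P)
    (A : ℝ → 𝓗 →L[ℂ] 𝓗) (hA : Continuous A)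
    (hsa : ∀ t, IsSelfAdjoint (A t))
    (u v : ℝ → 𝓗) (s : ℝ)
    (hu : ∀ t, HasDerivAt u ((-Complex.I) • (A t) (u t)) t)
    (hv : ∀ t, HasDerivAt v ((-Complex.I) • (P ∘L (A t) ∘L P) (v t)) t)
    (hvs : v s = P (u s)) :
    ∀ t, s ≤ t →
      ‖P (u t) - v t‖ ≤ ∫ τ in s..t, ‖(A τ) ((1 - P) (u τ))‖ := by
  intro t hst
  -- `inner ℝ x y` is then definitionally `(inner ℂ x y).re`.
  let _ : InnerProductSpace ℝ 𝓗 := InnerProductSpace.rclikeToReal ℂ 𝓗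
  have hP : IsStarProjection P := ⟨hPidem, hPsa⟩
  have hu_cont : Continuous u := continuous_iff_continuousAt.mpr fun τ => (hu τ).continuousAt
  have hleak_cont : Continuous fun τ => ‖A τ ((1 - P) (u τ))‖ :=
    (hA.clm_apply ((1 - P).continuous.comp hu_cont)).norm
  have hbound : ∀ τ, inner ℝ (P (u τ) - v τ)
      (-Complex.I • ((P ∘L A τ ∘L P) (P (u τ) - v τ) + P (A τ ((1 - P) (u τ))))) ≤
      ‖P (u τ) - v τ‖ * ‖A τ ((1 - P) (u τ))‖ := fun τ =>
    (((hsa τ).conjugate_self hPsa).re_inner_neg_I_smul_add_le _ _).trans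
      (by gcongr; exact hP.norm_apply_le _)
  simpa [hvs] using norm_le_norm_add_integral_of_inner_deriv_le_s5
    (fun τ => hasDerivAt_apply_sub_cutoff hPidem (hu τ) (hv τ)) hleak_cont
    (fun _ => norm_nonneg _) hbound hst
end

section
/- Let 𝓗 be a complex Hilbert space, let (P_N) be a sequence of orthogonal projections on 𝓗 (self-adjoint with P_N ∘ P_N = P_N) such that P_N x → x for every x ∈ 𝓗, and let A : ℝ → (𝓗 →L[ℂ] 𝓗) be continuous in operator norm with A t self-adjoint for every t. Let u : ℝ → 𝓗 be differentiable with u'(t) = −i • (A t)(u t) for all t, and for each N let v_N : ℝ → 𝓗 be differentiable with v_N'(t) = −i • (P_N ∘L (A t) ∘L P_N)(v_N t) for all t and v_N s = P_N (u s). Then for every compact interval [a,b] containing s, sup_{t ∈ [a,b]} ‖v_N t − u t‖ → 0 as N → ∞. -/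
/-!
The difference `w N = v N - u` solves `w N' = -i (P N A P N) (w N) - i (P N A P N - A) u`.
Being strongly convergent, the `P N` are pointwise bounded, hence by Banach–Steinhaus bounded by
some `C` and equicontinuous, so `P N → 1` uniformly on the compact sets `u '' [a, b]` and
`(fun t => A t (u t)) '' [a, b]`. Since `P A P u - A u = P A (P u - u) + (P (A u) - A u)`, the
source term therefore tends to zero uniformly on `[a, b]`, as does `w N s = P N (u s) - u s`.
Grönwall's inequality with the constant `C ^ 2 * sup ‖A‖`, run forward and backward from `s`,
then gives `w N → 0` uniformly on `[a, b]`.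
-/

open Filter Topology Set

theorem Equicontinuous.tendstoUniformlyOn_of_tendsto {ι X α : Type*} [TopologicalSpace X]
    [UniformSpace α] {F : ι → X → α} {f : X → α} {l : Filter ι} {K : Set X}
    (hF : Equicontinuous F) (hK : IsCompact K) (h : ∀ x ∈ K, Tendsto (F · x) l (𝓝 (f x))) :
    TendstoUniformlyOn F f l K := by
  have := isCompact_iff_compactSpace.1 hK
  have hFK : Equicontinuous fun i => K.domRestrict (F i) :=
    (equicontinuous_restrict_iff F).2 (hF.equicontinuousOn K)
  rw [tendstoUniformlyOn_iff_restrict]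
  exact UniformFun.tendsto_iff_tendstoUniformly.1
    ((hFK.tendsto_uniformFun_iff_pi l _).2 (tendsto_pi_nhds.2 fun x => h x x.2))

theorem Equicontinuous.tendsto_comp_sub_prod_principal {ι X E : Type*} [TopologicalSpace X]
    [NormedAddCommGroup E] {F : ι → E → E} {l : Filter ι} (hF : Equicontinuous F)
    (h : ∀ x, Tendsto (F · x) l (𝓝 x)) {g : X → E} {K : Set X} (hK : IsCompact K)
    (hg : ContinuousOn g K) :
    Tendsto (fun q : ι × X => F q.1 (g q.2) - g q.2) (l ×ˢ 𝓟 K) (𝓝 0) := by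
  have hFg : TendstoUniformlyOn (fun i x => F i (g x)) g l K :=
    ((hF.tendstoUniformlyOn_of_tendsto (hK.image_of_continuousOn hg) fun x _ => h x).comp g).mono
      (subset_preimage_image g K)
  rw [Metric.tendstoUniformlyOn_iff] at hFg
  refine (tendsto_prod_principal_iff (F := fun i x => F i (g x) - g x)).2 ?_
  rw [Metric.tendstoUniformlyOn_iff]
  simpa only [dist_eq_norm', sub_zero] using hFg


section Gronwall

variable {E : Type*} [NormedAddCommGroup E] [NormedSpace ℝ E]

theorem norm_le_gronwallBound_of_norm_deriv_le_of_mem_Icc {f f' : ℝ → E} {δ K ε a b s : ℝ}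
    (hf : ∀ t ∈ Icc a b, HasDerivAt f (f' t) t) (hs : s ∈ Icc a b) (hδ : ‖f s‖ ≤ δ)
    (bound : ∀ t ∈ Icc a b, ‖f' t‖ ≤ K * ‖f t‖ + ε) :
    ∀ t ∈ Icc a b, ‖f t‖ ≤ gronwallBound δ K ε |t - s| := by
  intro t ht
  rcases le_total s t with hst | hts
  · rw [abs_of_nonneg (sub_nonneg.2 hst)]
    exact norm_le_gronwallBound_of_norm_deriv_right_le
      (HasDerivAt.continuousOn fun x hx => hf x ⟨hs.1.trans hx.1, hx.2⟩)
      (fun x hx => (hf x ⟨hs.1.trans hx.1, hx.2.le⟩).hasDerivWithinAt) hδ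
      (fun x hx => bound x ⟨hs.1.trans hx.1, hx.2.le⟩) t ⟨hst, ht.2⟩
  · -- time reversal `τ ↦ -τ` turns the backward estimate into a forward one
    have hrev : ∀ τ ∈ Icc (-b) (-a), HasDerivAt (fun τ => f (-τ)) (-f' (-τ)) τ := fun τ hτ => by
      simpa [Function.comp_def] using
        (hf (-τ) ⟨le_neg.2 hτ.2, neg_le.2 hτ.1⟩).scomp τ (hasDerivAt_neg τ)
    have := norm_le_gronwallBound_of_norm_deriv_right_le (f := fun τ => f (-τ)) (b := -a)
      (HasDerivAt.continuousOn fun x hx => hrev x ⟨by linarith [hx.1, hs.2], hx.2⟩)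
      (fun x hx => (hrev x ⟨by linarith [hx.1, hs.2], hx.2.le⟩).hasDerivWithinAt)
      (by simpa using hδ)
      (fun x hx => by
        simpa using bound (-x) ⟨le_neg.2 hx.2.le, neg_le.2 (by linarith [hx.1, hs.2])⟩)
      (-t) ⟨neg_le_neg hts, neg_le_neg ht.1⟩
    rwa [neg_neg, neg_sub_neg, ← abs_of_nonneg (sub_nonneg.2 hts), abs_sub_comm] at this

theorem exists_pos_gronwallBound_lt (K x : ℝ) {η : ℝ} (hη : 0 < η) :
    ∃ ε > 0, gronwallBound ε K ε x < η := by
  have hcont : Continuous fun ε => gronwallBound ε K ε x := by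
    by_cases hK : K = 0
    · simp only [gronwallBound_K0, hK]
      fun_prop
    · simp only [gronwallBound_of_K_ne_0 hK]
      fun_prop
  have hlim : Tendsto (fun ε => gronwallBound ε K ε x) (𝓝[>] 0) (𝓝 0) := by
    simpa [gronwallBound_ε0_δ0] using (hcont.tendsto 0).mono_left nhdsWithin_le_nhds
  exact ((hlim.eventually (gt_mem_nhds hη)).and self_mem_nhdsWithin).exists.imp
    fun ε h => ⟨h.2, h.1⟩

theorem tendstoUniformlyOn_zero_of_norm_deriv_le {ι F : Type*} [SeminormedAddCommGroup F]
    {l : Filter ι} {w w' : ι → ℝ → E} {ρ : ι → ℝ → F} {K a b s : ℝ}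
    (hw : ∀ i, ∀ t ∈ Icc a b, HasDerivAt (w i) (w' i t) t) (hs : s ∈ Icc a b)
    (hws : Tendsto (fun i => w i s) l (𝓝 0)) (hρ : TendstoUniformlyOn ρ 0 l (Icc a b))
    (bound : ∀ i, ∀ t ∈ Icc a b, ‖w' i t‖ ≤ K * ‖w i t‖ + ‖ρ i t‖) :
    TendstoUniformlyOn w 0 l (Icc a b) := by
  rw [Metric.tendstoUniformlyOn_iff] at hρ ⊢
  intro η hη
  obtain ⟨ε, hε, hεη⟩ := exists_pos_gronwallBound_lt (max K 0) (b - a) hη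
  filter_upwards [(tendsto_zero_iff_norm_tendsto_zero.1 hws).eventually (eventually_le_nhds hε),
    hρ ε hε] with i hi hρi t ht
  rw [Pi.zero_apply, dist_zero_left]
  have bound' : ∀ t ∈ Icc a b, ‖w' i t‖ ≤ max K 0 * ‖w i t‖ + ε := fun t ht => by
    have := hρi t ht
    rw [Pi.zero_apply, dist_zero_left] at this
    exact (bound i t ht).trans (by gcongr; exact le_max_left K 0)
  calc ‖w i t‖ ≤ gronwallBound ε (max K 0) ε |t - s| :=
        norm_le_gronwallBound_of_norm_deriv_le_of_mem_Icc (hw i) hs hi bound' t ht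
    _ ≤ gronwallBound ε (max K 0) ε (b - a) :=
        gronwallBound_mono hε.le hε.le (le_max_right K 0)
          (abs_sub_le_iff.2 ⟨by linarith [ht.2, hs.1], by linarith [ht.1, hs.2]⟩)
    _ < η := hεη

end Gronwall

theorem TendstoUniformlyOn.tendsto_sSup_norm {ι α E : Type*} [SeminormedAddCommGroup E]
    {F : ι → α → E} {l : Filter ι} {s : Set α} (h : TendstoUniformlyOn F 0 l s) :
    Tendsto (fun i => sSup ((fun x => ‖F i x‖) '' s)) l (𝓝 0) := by
  rw [Metric.tendstoUniformlyOn_iff] at h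
  rw [Metric.tendsto_nhds]
  intro ε hε
  filter_upwards [h (ε / 2) (half_pos hε)] with i hi
  have h0 : 0 ≤ sSup ((fun x => ‖F i x‖) '' s) :=
    Real.sSup_nonneg (by rintro _ ⟨x, -, rfl⟩; exact norm_nonneg _)
  have h1 : sSup ((fun x => ‖F i x‖) '' s) ≤ ε / 2 :=
    Real.sSup_le (by rintro _ ⟨x, hx, rfl⟩; simpa using (hi x hx).le) (half_pos hε).le
  rw [Real.dist_0_eq_abs, abs_of_nonneg h0]
  linarith

section Compression

variable {𝕜 E : Type*} [NontriviallyNormedField 𝕜] [NormedAddCommGroup E] [NormedSpace 𝕜 E]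

theorem ContinuousLinearMap.norm_comp_comp_apply_sub_le {P B : E →L[𝕜] E} {C M : ℝ}
    (hP : ‖P‖ ≤ C) (hB : ‖B‖ ≤ M) (x : E) :
    ‖(P ∘L B ∘L P) x - B x‖ ≤ C * M * ‖P x - x‖ + ‖P (B x) - B x‖ := by
  have hPB : ‖P ∘L B‖ ≤ C * M :=
    (opNorm_comp_le _ _).trans (mul_le_mul hP hB (norm_nonneg _) ((norm_nonneg _).trans hP))
  calc ‖(P ∘L B ∘L P) x - B x‖ = ‖(P ∘L B) (P x - x) + (P (B x) - B x)‖ := by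
        simp only [comp_apply, map_sub]; abel_nf
    _ ≤ ‖(P ∘L B) (P x - x)‖ + ‖P (B x) - B x‖ := norm_add_le _ _
    _ ≤ C * M * ‖P x - x‖ + ‖P (B x) - B x‖ := by gcongr; exact le_of_opNorm_le _ hPB _

theorem ContinuousLinearMap.norm_comp_comp_apply_sub_apply_le {P B : E →L[𝕜] E} {C M : ℝ}
    (hP : ‖P‖ ≤ C) (hB : ‖B‖ ≤ M) (x y : E) :
    ‖(P ∘L B ∘L P) x - B y‖ ≤ C * M * C * ‖x - y‖ + ‖(P ∘L B ∘L P) y - B y‖ := by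
  have hC : 0 ≤ C := (norm_nonneg _).trans hP
  have hM : 0 ≤ M := (norm_nonneg _).trans hB
  have hPBP : ‖P ∘L B ∘L P‖ ≤ C * M * C :=
    calc ‖P ∘L B ∘L P‖ ≤ ‖P‖ * (‖B‖ * ‖P‖) :=
          (opNorm_comp_le _ _).trans (by gcongr; exact opNorm_comp_le _ _)
      _ ≤ C * M * C := by rw [← mul_assoc]; gcongr
  calc ‖(P ∘L B ∘L P) x - B y‖ = ‖(P ∘L B ∘L P) (x - y) + ((P ∘L B ∘L P) y - B y)‖ := by
        rw [map_sub]; abel_nf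
    _ ≤ C * M * C * ‖x - y‖ + ‖(P ∘L B ∘L P) y - B y‖ :=
        (norm_add_le _ _).trans (by gcongr; exact le_of_opNorm_le _ hPBP _)

theorem tendstoUniformlyOn_comp_comp_apply_sub {ι X : Type*} [TopologicalSpace X]
    {l : Filter ι} {P : ι → E →L[𝕜] E} {C : ℝ} (hP : ∀ i, ‖P i‖ ≤ C)
    (hPconv : ∀ x, Tendsto (P · x) l (𝓝 x)) {B : X → E →L[𝕜] E} {u : X → E} {K : Set X}
    (hK : IsCompact K) (hB : ContinuousOn B K) (hu : ContinuousOn u K) :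
    TendstoUniformlyOn (fun i x => (P i ∘L B x ∘L P i) (u x) - B x (u x)) 0 l K := by
  have hPeq : Equicontinuous fun i => ⇑(P i) :=
    ((NormedSpace.equicontinuous_TFAE P).out 5 1).1 (by exact ⟨C, hP⟩)
  obtain ⟨M, hM⟩ := hK.exists_bound_of_continuousOn hB
  have hPu := hPeq.tendsto_comp_sub_prod_principal hPconv hK hu
  have hPBu := hPeq.tendsto_comp_sub_prod_principal hPconv hK (hB.clm_apply hu)
  have hlim := (hPu.norm.const_mul (C * M)).add hPBu.norm
  rw [norm_zero, mul_zero, add_zero] at hlim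
  refine (tendsto_prod_principal_iff (c := (0 : E))).1 (squeeze_zero_norm' ?_ hlim)
  exact eventually_prod_principal_iff.2 (Eventually.of_forall fun i x hx =>
    ContinuousLinearMap.norm_comp_comp_apply_sub_le (hP i) (hM x hx) (u x))

end Compression

theorem strong_convergence_cutoff_dynamics_general
    {𝓗 : Type*} [NormedAddCommGroup 𝓗] [InnerProductSpace ℂ 𝓗] [CompleteSpace 𝓗]
    (P : ℕ → 𝓗 →L[ℂ] 𝓗)
    (hPconv : ∀ x : 𝓗, Tendsto (fun N => P N x) atTop (𝓝 x))
    (A : ℝ → 𝓗 →L[ℂ] 𝓗) (hA : Continuous A)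
    (u : ℝ → 𝓗) (s : ℝ)
    (hu : ∀ t, HasDerivAt u ((-Complex.I) • (A t) (u t)) t)
    (v : ℕ → ℝ → 𝓗)
    (hv : ∀ N t, HasDerivAt (v N) ((-Complex.I) • ((P N) ∘L (A t) ∘L (P N)) (v N t)) t)
    (hvs : ∀ N, v N s = P N (u s)) :
    ∀ a b : ℝ, a ≤ s → s ≤ b →
      Tendsto (fun N => sSup ((fun t => ‖v N t - u t‖) '' Set.Icc a b)) atTop (𝓝 0) := by
  intro a b has hsb
  have hs : s ∈ Icc a b := ⟨has, hsb⟩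
  have hK : IsCompact (Icc a b) := isCompact_Icc
  obtain ⟨C, hC⟩ : ∃ C, ∀ N, ‖P N‖ ≤ C := ((NormedSpace.equicontinuous_TFAE P).out 2 5).1 <|
    PolynormableSpace.banach_steinhaus fun x => (hPconv x).isVonNBounded_range ℂ
  obtain ⟨M, hM⟩ := hK.exists_bound_of_continuousOn hA.continuousOn
  have hu_cont : Continuous u := continuous_iff_continuousAt.2 fun t => (hu t).continuousAt
  have hw0 : Tendsto (fun N => v N s - u s) atTop (𝓝 0) := by
    simpa [hvs] using (hPconv (u s)).sub_const (u s)
  have hbound : ∀ N, ∀ t ∈ Icc a b,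
      ‖-Complex.I • (P N ∘L A t ∘L P N) (v N t) - -Complex.I • A t (u t)‖ ≤
        C * M * C * ‖v N t - u t‖ + ‖(P N ∘L A t ∘L P N) (u t) - A t (u t)‖ := by
    intro N t ht
    rw [← smul_sub, norm_smul, norm_neg, Complex.norm_I, one_mul]
    exact ContinuousLinearMap.norm_comp_comp_apply_sub_apply_le (hC N) (hM t ht) _ _
  exact TendstoUniformlyOn.tendsto_sSup_norm <| tendstoUniformlyOn_zero_of_norm_deriv_le
    (fun N t _ => (hv N t).sub (hu t)) hs hw0
    (tendstoUniformlyOn_comp_comp_apply_sub hC hPconv hK hA.continuousOn hu_cont.continuousOn)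
    hbound

/-- **Strong convergence of the spectral cut-off dynamics (bounded generators).**
Let `P N` be orthogonal projections converging strongly to the identity and
`A` a norm-continuous family of bounded self-adjoint operators.  If `u` solves
`u' = -i A(t) u` and each `v N` solves the cut-off equation
`v' = -i (P N ∘ A(t) ∘ P N) v` with `v N s = P N (u s)`, then
`sup_{t ∈ [a,b]} ‖v N t - u t‖ → 0` for every compact interval `[a,b]`
containing `s`. -/
theorem strong_convergence_cutoff_dynamics
    {𝓗 : Type*} [NormedAddCommGroup 𝓗] [InnerProductSpace ℂ 𝓗] [CompleteSpace 𝓗]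
    (P : ℕ → 𝓗 →L[ℂ] 𝓗)
    (hPsa : ∀ N, IsSelfAdjoint (P N)) (hPidem : ∀ N, (P N) ∘L (P N) = P N)
    (hPconv : ∀ x : 𝓗, Tendsto (fun N => P N x) atTop (𝓝 x))
    (A : ℝ → 𝓗 →L[ℂ] 𝓗) (hA : Continuous A)
    (hsa : ∀ t, IsSelfAdjoint (A t))
    (u : ℝ → 𝓗) (s : ℝ)
    (hu : ∀ t, HasDerivAt u ((-Complex.I) • (A t) (u t)) t)
    (v : ℕ → ℝ → 𝓗)
    (hv : ∀ N t, HasDerivAt (v N) ((-Complex.I) • ((P N) ∘L (A t) ∘L (P N)) (v N t)) t)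
    (hvs : ∀ N, v N s = P N (u s)) :
    ∀ a b : ℝ, a ≤ s → s ≤ b →
      Tendsto (fun N => sSup ((fun t => ‖v N t - u t‖) '' Set.Icc a b)) atTop (𝓝 0) :=
  strong_convergence_cutoff_dynamics_general P hPconv A hA u s hu v hv hvs
end

section
/- Let 𝓗 be a complex Hilbert space, let W : 𝓗 →L[ℂ] 𝓗 be self-adjoint with Re⟪W x, x⟫ ≥ 0 for all x, let B : ℝ → (𝓗 →L[ℂ] 𝓗) be continuous with B t self-adjoint for every t, and let C ≥ 0 be a constant such that |⟪(W ∘L (B t) − (B t) ∘L W) x, x⟫| ≤ C · Re⟪W x, x⟫ for all x ∈ 𝓗 and all t. If v : ℝ → 𝓗 is differentiable with v'(t) = −i • (B t)(v t) for all t, then for all s, t ∈ ℝ, Re⟪W (v t), v t⟫ ≤ exp(C·|t − s|) · Re⟪W (v s), v s⟫. -/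
/-!
Along a solution of `i v' = B(t) v` with `B(t)` self-adjoint, the weighted energy
`f(t) = Re ⟪W v, v⟫` has derivative `Re (i ⟪[W, B(t)] v, v⟫)`, so the commutator bound gives
`|f'| ≤ C f`, and Grönwall's inequality, run forwards and backwards in time, gives the estimate.
-/

open Filter Topology

local notation "⟪" x ", " y "⟫" => @inner ℂ _ _ x y

open Real in
theorem le_exp_mul_of_hasDerivAt_le {f f' : ℝ → ℝ} {C s t : ℝ}
    (hf : ∀ u, HasDerivAt f (f' u) u) (hbound : ∀ u, f' u ≤ C * f u) (hst : s ≤ t) :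
    f t ≤ exp (C * (t - s)) * f s := by
  have := le_gronwallBound_of_liminf_deriv_right_le (ε := 0) (b := t)
    (fun u _ => (hf u).continuousAt.continuousWithinAt)
    (fun u _ _ hr => (hf u).hasDerivWithinAt.liminf_right_slope_le hr) le_rfl
    (fun u _ => by simpa using hbound u) t ⟨hst, le_rfl⟩
  rwa [gronwallBound_ε0, mul_comm] at this

open Real in
theorem le_exp_mul_abs_of_abs_hasDerivAt_le {f f' : ℝ → ℝ} {C : ℝ}
    (hf : ∀ u, HasDerivAt f (f' u) u) (hbound : ∀ u, |f' u| ≤ C * f u) (s t : ℝ) :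
    f t ≤ exp (C * |t - s|) * f s := by
  rcases le_total s t with hst | hts
  · rw [abs_of_nonneg (sub_nonneg.2 hst)]
    exact le_exp_mul_of_hasDerivAt_le hf (fun u => (le_abs_self _).trans (hbound u)) hst
  · have hrev : ∀ u, HasDerivAt (fun u => f (-u)) (-f' (-u)) u := fun u => by
      simpa [Function.comp_def] using (hf (-u)).comp u (hasDerivAt_neg u)
    have := le_exp_mul_of_hasDerivAt_le hrev (fun u => (neg_le_abs _).trans (hbound (-u)))
      (neg_le_neg hts)
    rw [abs_of_nonpos (sub_nonpos.2 hts), neg_sub]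
    simpa [neg_add_eq_sub] using this

theorem hasDerivAt_re_inner_apply_self {E : Type*} [NormedAddCommGroup E]
    [InnerProductSpace ℂ E] (W : E →L[ℂ] E) {v : ℝ → E} {v' : E} {t : ℝ}
    (hv : HasDerivAt v v' t) :
    HasDerivAt (fun u => (⟪W (v u), v u⟫).re) (⟪W (v t), v'⟫ + ⟪W v', v t⟫).re t := by
  have hWv : HasDerivAt (fun u => W (v u)) (W v') t :=
    (W.restrictScalars ℝ).hasFDerivAt.comp_hasDerivAt t hv
  exact Complex.reCLM.hasFDerivAt.comp_hasDerivAt t (hWv.inner ℂ hv)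

theorem IsSelfAdjoint.inner_add_inner_neg_I_smul {E : Type*} [NormedAddCommGroup E]
    [InnerProductSpace ℂ E] [CompleteSpace E] {B : E →L[ℂ] E} (hB : IsSelfAdjoint B)
    (W : E →L[ℂ] E) (x : E) :
    ⟪W x, -Complex.I • B x⟫ + ⟪W (-Complex.I • B x), x⟫ =
      Complex.I * ⟪(W ∘L B - B ∘L W) x, x⟫ := by
  have hBW : ⟪B (W x), x⟫ = ⟪W x, B x⟫ := hB.isSymmetric (W x) x
  rw [map_smul, inner_smul_right, inner_smul_left, sub_apply, inner_sub_left,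
    ContinuousLinearMap.comp_apply, ContinuousLinearMap.comp_apply, hBW]
  simp only [map_neg, Complex.conj_I, neg_neg]
  ring

theorem hasDerivAt_re_inner_apply_self_of_schrodinger {E : Type*} [NormedAddCommGroup E]
    [InnerProductSpace ℂ E] [CompleteSpace E] (W : E →L[ℂ] E) {B : E →L[ℂ] E}
    (hB : IsSelfAdjoint B) {v : ℝ → E} {t : ℝ} (hv : HasDerivAt v (-Complex.I • B (v t)) t) :
    HasDerivAt (fun u => (⟪W (v u), v u⟫).re)
      (Complex.I * ⟪(W ∘L B - B ∘L W) (v t), v t⟫).re t := by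
  simpa only [hB.inner_add_inner_neg_I_smul] using hasDerivAt_re_inner_apply_self W hv

theorem commutator_criterion_stability_general
    {𝓗 : Type*} [NormedAddCommGroup 𝓗] [InnerProductSpace ℂ 𝓗] [CompleteSpace 𝓗]
    (W : 𝓗 →L[ℂ] 𝓗)
    (B : ℝ → 𝓗 →L[ℂ] 𝓗)
    (hsa : ∀ t, IsSelfAdjoint (B t))
    (C : ℝ)
    (hcomm : ∀ (x : 𝓗) (t : ℝ),
      ‖⟪(W ∘L (B t) - (B t) ∘L W) x, x⟫‖ ≤ C * (⟪W x, x⟫).re)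
    (v : ℝ → 𝓗)
    (hv : ∀ t, HasDerivAt v ((-Complex.I) • (B t) (v t)) t) :
    ∀ s t : ℝ,
      (⟪W (v t), v t⟫).re ≤ Real.exp (C * |t - s|) * (⟪W (v s), v s⟫).re := by
  refine le_exp_mul_abs_of_abs_hasDerivAt_le
    (fun t => hasDerivAt_re_inner_apply_self_of_schrodinger W (hsa t) (hv t)) fun t => ?_
  calc |(Complex.I * ⟪(W ∘L B t - B t ∘L W) (v t), v t⟫).re|
      ≤ ‖Complex.I * ⟪(W ∘L B t - B t ∘L W) (v t), v t⟫‖ := Complex.abs_re_le_norm _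
    _ = ‖⟪(W ∘L B t - B t ∘L W) (v t), v t⟫‖ := by rw [norm_mul, Complex.norm_I, one_mul]
    _ ≤ C * (⟪W (v t), v t⟫).re := hcomm (v t) t

/-- **Commutator criterion for cut-off stability (Gronwall estimate).**
Let `W` be a bounded self-adjoint nonnegative operator and `B` a continuous
family of bounded self-adjoint operators such that
`|⟪[W, B t] x, x⟫| ≤ C · Re ⟪W x, x⟫` for all `x` and `t`.  Then every solution
of `v' = -i B(t) v` satisfies
`Re ⟪W (v t), v t⟫ ≤ exp(C |t - s|) · Re ⟪W (v s), v s⟫`. -/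
theorem commutator_criterion_stability
    {𝓗 : Type*} [NormedAddCommGroup 𝓗] [InnerProductSpace ℂ 𝓗] [CompleteSpace 𝓗]
    (W : 𝓗 →L[ℂ] 𝓗) (hWsa : IsSelfAdjoint W)
    (hWpos : ∀ x : 𝓗, 0 ≤ (⟪W x, x⟫).re)
    (B : ℝ → 𝓗 →L[ℂ] 𝓗) (hB : Continuous B)
    (hsa : ∀ t, IsSelfAdjoint (B t))
    (C : ℝ) (hC : 0 ≤ C)
    (hcomm : ∀ (x : 𝓗) (t : ℝ),
      ‖⟪(W ∘L (B t) - (B t) ∘L W) x, x⟫‖ ≤ C * (⟪W x, x⟫).re)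
    (v : ℝ → 𝓗)
    (hv : ∀ t, HasDerivAt v ((-Complex.I) • (B t) (v t)) t) :
    ∀ s t : ℝ,
      (⟪W (v t), v t⟫).re ≤ Real.exp (C * |t - s|) * (⟪W (v s), v s⟫).re :=
  commutator_criterion_stability_general W B hsa C hcomm v hv
end

section
/- Let 𝓗 be a complex Hilbert space, let (P_N) be a sequence of continuous linear maps with ‖P_N‖ ≤ 1 for every N and P_N x → x for every x ∈ 𝓗, and let A : ℝ → (𝓗 →L[ℂ] 𝓗) be continuous in operator norm. Fix m ≥ 1 and u ∈ 𝓗. For times t = (t_1,…,t_m) ∈ [0,1]^m define the word W(t) = (A t_m) ∘L ⋯ ∘L (A t_1) and the cut-off word W_N(t) = P_N ∘L (A t_m) ∘L P_N ∘L (A t_{m−1}) ∘L P_N ∘L ⋯ ∘L P_N ∘L (A t_1) ∘L P_N. Then sup_{t ∈ [0,1]^m} ‖W_N(t) u − W(t) u‖ → 0 as N → ∞. -/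
/-!
Uniformly bounded operators converging strongly also converge continuously: `P_N v_N → v`
whenever `v_N → v`, since `‖P_N v_N - P_N v‖ ≤ ‖v_N - v‖`. Feeding the word one letter at a
time, `W_N(s) u → W(t) u` as `N → ∞` and `s → t` jointly. On the compact cube, continuous
convergence to the continuous limit `W(·) u` is uniform convergence, which controls the
supremum.
-/

open Filter Topology

theorem TendstoUniformlyOn.of_tendsto_nhdsWithin {ι X β : Type*} [TopologicalSpace X]
    [UniformSpace β] {F : ι → X → β} {f : X → β} {p : Filter ι} {K : Set X}
    (hK : IsCompact K) (hf : ContinuousOn f K)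
    (hF : ∀ x ∈ K, Tendsto (fun y : ι × X => F y.1 y.2) (p ×ˢ 𝓝[K] x) (𝓝 (f x))) :
    TendstoUniformlyOn F f p K := by
  refine (tendstoLocallyUniformlyOn_iff_tendstoUniformlyOn_of_compact hK).1 <|
    tendstoLocallyUniformlyOn_iff_forall_tendsto.2 fun x hx => ?_
  have hf' := Uniform.tendsto_nhds_left.1 ((hf x hx).tendsto.comp (tendsto_snd (f := p)))
  exact hf'.uniformity_trans (Uniform.tendsto_nhds_right.1 (hF x hx))

theorem TendstoUniformlyOn.tendsto_sSup_norm_sub {ι X E : Type*} [SeminormedAddCommGroup E]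
    {F : ι → X → E} {f : X → E} {p : Filter ι} {K : Set X} (h : TendstoUniformlyOn F f p K) :
    Tendsto (fun i => sSup ((fun x => ‖F i x - f x‖) '' K)) p (𝓝 0) := by
  rw [Metric.tendstoUniformlyOn_iff] at h
  have hnonneg : ∀ i, 0 ≤ sSup ((fun x => ‖F i x - f x‖) '' K) := fun i =>
    Real.sSup_nonneg (by rintro _ ⟨x, -, rfl⟩; positivity)
  refine tendsto_order.2 ⟨fun a ha => .of_forall fun i => ha.trans_le (hnonneg i),
    fun ε hε => ?_⟩
  filter_upwards [h (ε / 2) (half_pos hε)] with i hi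
  refine (Real.sSup_le ?_ (half_pos hε).le).trans_lt (half_lt_self hε)
  rintro _ ⟨x, hx, rfl⟩
  dsimp only
  rw [← dist_eq_norm, dist_comm]
  exact (hi x hx).le

section Operators

variable {𝕜 E F : Type*} [NontriviallyNormedField 𝕜] [SeminormedAddCommGroup E]
  [NormedSpace 𝕜 E] [SeminormedAddCommGroup F] [NormedSpace 𝕜 F]

theorem tendsto_apply_of_norm_le {ι α : Type*} {p : Filter ι} {l : Filter α}
    {P : ι → E →L[𝕜] F} {T : E →L[𝕜] F} {C : ℝ} (hP : ∀ i, ‖P i‖ ≤ C)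
    (hPT : ∀ x, Tendsto (fun i => P i x) p (𝓝 (T x)))
    {n : α → ι} (hn : Tendsto n l p) {v : α → E} {v₀ : E} (hv : Tendsto v l (𝓝 v₀)) :
    Tendsto (fun a => P (n a) (v a)) l (𝓝 (T v₀)) := by
  have hsmall : Tendsto (fun a => P (n a) (v a - v₀)) l (𝓝 0) := by
    refine squeeze_zero_norm (fun a => (P (n a)).le_of_opNorm_le (hP (n a)) _) ?_
    simpa using (tendsto_sub_nhds_zero_iff.2 hv).norm.const_mul C
  simpa using hsmall.add ((hPT v₀).comp hn)

theorem tendsto_cutoff_word_apply {α : Type*} {l : Filter α} {Q : α → E →L[𝕜] E}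
    (hQ : ∀ {v : α → E} {v₀ : E}, Tendsto v l (𝓝 v₀) → Tendsto (fun a => Q a (v a)) l (𝓝 v₀))
    {m : ℕ} {B : Fin m → α → E →L[𝕜] E} {B₀ : Fin m → E →L[𝕜] E}
    (hB : ∀ i, Tendsto (B i) l (𝓝 (B₀ i))) (u : E) :
    Tendsto (fun a => (Q a * (List.ofFn fun i => B i a * Q a).reverse.prod) u) l
      (𝓝 ((List.ofFn B₀).reverse.prod u)) := by
  induction m with
  | zero => simpa using hQ tendsto_const_nhds
  | succ m ih =>
    simp only [List.ofFn_succ', List.concat_eq_append, List.reverse_append,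
      List.reverse_singleton, List.singleton_append, List.prod_cons, mul_assoc]
    exact hQ <| (isBoundedBilinearMap_apply.continuous.tendsto _).comp
      ((hB (Fin.last m)).prodMk_nhds (ih fun i => hB i.castSucc))

end Operators

theorem cutoff_word_convergence_general
    {𝓗 : Type*} [NormedAddCommGroup 𝓗] [InnerProductSpace ℂ 𝓗]
    (P : ℕ → 𝓗 →L[ℂ] 𝓗)
    (hP : ∀ N, ‖P N‖ ≤ 1)
    (hPconv : ∀ x : 𝓗, Tendsto (fun N => P N x) atTop (𝓝 x))
    (A : ℝ → 𝓗 →L[ℂ] 𝓗) (hA : Continuous A)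
    (m : ℕ) (u : 𝓗) :
    Tendsto
      (fun N => sSup ((fun t : Fin m → ℝ =>
        ‖(P N * (List.ofFn fun i : Fin m => A (t i) * P N).reverse.prod) u -
          ((List.ofFn fun i : Fin m => A (t i)).reverse.prod) u‖) ''
        Set.Icc (0 : Fin m → ℝ) 1))
      atTop (𝓝 0) := by
  have hAi (i : Fin m) : Continuous fun t : Fin m → ℝ => A (t i) := hA.comp (continuous_apply i)
  have hword : Continuous fun t : Fin m → ℝ => (List.ofFn fun i => A (t i)).reverse.prod u := by
    simp only [List.ofFn_eq_map, ← List.map_reverse]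
    exact (continuous_list_prod _ fun i _ => hAi i).clm_apply continuous_const
  refine TendstoUniformlyOn.tendsto_sSup_norm_sub <|
    .of_tendsto_nhdsWithin isCompact_Icc hword.continuousOn fun t _ => ?_
  refine tendsto_cutoff_word_apply (fun hv => ?_) (fun i => ?_) u
  · exact tendsto_apply_of_norm_le (T := .id ℂ 𝓗) hP hPconv tendsto_fst hv
  · exact ((hAi i).tendsto t).comp (tendsto_snd.mono_right nhdsWithin_le_nhds)

/-- **Convergence of cut-off words.**
Let `P N` be contractions converging strongly to the identity and `A` a
norm-continuous family of bounded operators.  For `m ≥ 1`, time tuples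
`t ∈ [0,1]^m`, the cut-off word
`P_N ∘ A(t_m) ∘ P_N ∘ ⋯ ∘ P_N ∘ A(t_1) ∘ P_N` applied to a fixed vector `u`
converges to the uncut word `A(t_m) ∘ ⋯ ∘ A(t_1)` applied to `u`, uniformly for
`t` in the cube. -/
theorem cutoff_word_convergence
    {𝓗 : Type*} [NormedAddCommGroup 𝓗] [InnerProductSpace ℂ 𝓗] [CompleteSpace 𝓗]
    (P : ℕ → 𝓗 →L[ℂ] 𝓗)
    (hP : ∀ N, ‖P N‖ ≤ 1)
    (hPconv : ∀ x : 𝓗, Tendsto (fun N => P N x) atTop (𝓝 x))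
    (A : ℝ → 𝓗 →L[ℂ] 𝓗) (hA : Continuous A)
    (m : ℕ) (hm : 1 ≤ m) (u : 𝓗) :
    Tendsto
      (fun N => sSup ((fun t : Fin m → ℝ =>
        ‖(P N * (List.ofFn fun i : Fin m => A (t i) * P N).reverse.prod) u -
          ((List.ofFn fun i : Fin m => A (t i)).reverse.prod) u‖) ''
        Set.Icc (0 : Fin m → ℝ) 1))
      atTop (𝓝 0) :=
  cutoff_word_convergence_general P hP hPconv A hA m u
end
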